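/- Consider a finite family of matrices A_i ∈ ℝ^{d×d}, i ∈ P = {1,…,N}, and a switching signal σ. If for the given σ the switched linear system ẋ(t) = A_{σ(t)} x(t) is uniformly globally asymptotically convergent (i.e., for all r, ε > 0 there exists T(r,ε) > 0 such that every solution with ‖x(0)‖ < r satisfies ‖x(t)‖ < ε for all t > T(r,ε)), then the switched system is also Lyapunov stable for σ (i.e., for all ε > 0 there exists δ > 0 such that ‖x(0)‖ < δ implies ‖x(t)‖ < ε for all t ≥ 0); consequently it is globally asymptotically stable for σ. -/

import Mathlib

open scoped RealInnerProductSpace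

/-- `x` is a solution on `[0,∞)` of the switched linear system generated by the
family `A` and the switching signal with switching instants `τ` and index sequence `s`:
it is continuous on `[0,∞)` and satisfies `x'(t) = A_{s n} x(t)` on each `[τ n, τ (n+1))`. -/
def IsSwitchedSolution {d N : ℕ} (A : Fin N → Matrix (Fin d) (Fin d) ℝ)
    (τ : ℕ → ℝ) (s : ℕ → Fin N) (x : ℝ → EuclideanSpace ℝ (Fin d)) : Prop :=
  ContinuousOn x (Set.Ici 0) ∧
  ∀ n : ℕ, ∀ t ∈ Set.Ico (τ n) (τ (n + 1)),
    HasDerivWithinAt x (Matrix.toEuclideanLin (A (s n)) (x t)) (Set.Ico (τ n) (τ (n + 1))) t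

/-!
On a finite horizon `[0, T]` every solution grows at most like `‖x 0‖ e^{M t}` (Grönwall),
where `M` bounds the operator norms of the finitely many `A i`. Uniform convergence from the
ball of radius `1` gives a `T` after which every such solution is `ε`-small; starting inside
the ball of radius `min 1 (ε e^{-M T})` also keeps it `ε`-small before `T`.
-/

open Filter Set

theorem exists_mem_Ico_of_tendsto_atTop {α : Type*} [LinearOrder α] [NoMaxOrder α]
    {τ : ℕ → α} (hτ : Tendsto τ atTop atTop) {t : α} (ht : τ 0 ≤ t) :
    ∃ n, t ∈ Ico (τ n) (τ (n + 1)) := by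
  classical
  have hex : ∃ m, t < τ m := (hτ.eventually (eventually_gt_atTop t)).exists
  obtain ⟨n, hn⟩ : ∃ n, Nat.find hex = n + 1 :=
    Nat.exists_eq_succ_of_ne_zero fun h => (h ▸ Nat.find_spec hex).not_ge ht
  exact ⟨n, not_lt.1 (Nat.find_min hex (by omega)), hn ▸ Nat.find_spec hex⟩

theorem Matrix.exists_forall_norm_toEuclideanLin_le {ι n : Type*} [Fintype ι] [Fintype n]
    [DecidableEq n] (A : ι → Matrix n n ℝ) :
    ∃ M ≥ 0, ∀ i v, ‖Matrix.toEuclideanLin (A i) v‖ ≤ M * ‖v‖ := by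
  refine ⟨∑ i, ‖Matrix.toEuclideanCLM (𝕜 := ℝ) (A i)‖, by positivity, fun i v => ?_⟩
  calc ‖Matrix.toEuclideanLin (A i) v‖ = ‖Matrix.toEuclideanCLM (𝕜 := ℝ) (A i) v‖ := rfl
    _ ≤ ‖Matrix.toEuclideanCLM (𝕜 := ℝ) (A i)‖ * ‖v‖ := (Matrix.toEuclideanCLM (𝕜 := ℝ) (A i)).le_opNorm v
    _ ≤ _ := by
      gcongr
      exact Finset.single_le_sum (fun j _ => norm_nonneg (Matrix.toEuclideanCLM (𝕜 := ℝ) (A j)))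
        (Finset.mem_univ i)

namespace IsSwitchedSolution

variable {d N : ℕ} {A : Fin N → Matrix (Fin d) (Fin d) ℝ} {τ : ℕ → ℝ} {s : ℕ → Fin N}
  {x : ℝ → EuclideanSpace ℝ (Fin d)}

theorem exists_hasDerivWithinAt_Ici (hx : IsSwitchedSolution A τ s x)
    (hτ : Tendsto τ atTop atTop) {u : ℝ} (hu : τ 0 ≤ u) :
    ∃ i, HasDerivWithinAt x (Matrix.toEuclideanLin (A i) (x u)) (Ici u) u := by
  obtain ⟨n, hn⟩ := exists_mem_Ico_of_tendsto_atTop hτ hu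
  exact ⟨s n, (hx.2 n u hn).mono_of_mem_nhdsWithin (Ico_mem_nhdsGE_of_mem hn)⟩

theorem norm_le_mul_exp (hx : IsSwitchedSolution A τ s x) (hτ0 : τ 0 = 0)
    (hτ : Tendsto τ atTop atTop) {M : ℝ}
    (hM : ∀ i v, ‖Matrix.toEuclideanLin (A i) v‖ ≤ M * ‖v‖) {t : ℝ} (ht : 0 ≤ t) :
    ‖x t‖ ≤ ‖x 0‖ * Real.exp (M * t) := by
  have hderiv : ∀ u ∈ Ico 0 t, ∃ v, HasDerivWithinAt x v (Ici u) u ∧ ‖v‖ ≤ M * ‖x u‖ := by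
    intro u hu
    obtain ⟨i, hi⟩ := hx.exists_hasDerivWithinAt_Ici hτ (hτ0 ▸ hu.1)
    exact ⟨_, hi, hM i (x u)⟩
  choose! v hv hvM using hderiv
  have := norm_le_gronwallBound_of_norm_deriv_right_le (hx.1.mono Icc_subset_Ici_self) hv
    le_rfl (fun u hu => (hvM u hu).trans (le_add_of_nonneg_right le_rfl)) t ⟨ht, le_rfl⟩
  rwa [gronwallBound_ε0, sub_zero] at this

end IsSwitchedSolution

theorem stmt0_general {d N : ℕ} (A : Fin N → Matrix (Fin d) (Fin d) ℝ)
    (τ : ℕ → ℝ) (s : ℕ → Fin N)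
    (hτ0 : τ 0 = 0)
    (hτtop : Filter.Tendsto τ Filter.atTop Filter.atTop)
    (hconv : ∀ r > (0 : ℝ), ∀ ε > (0 : ℝ), ∃ T > (0 : ℝ),
      ∀ x : ℝ → EuclideanSpace ℝ (Fin d), IsSwitchedSolution A τ s x →
        ‖x 0‖ < r → ∀ t > T, ‖x t‖ < ε) :
    (∀ ε > (0 : ℝ), ∃ δ > (0 : ℝ),
      ∀ x : ℝ → EuclideanSpace ℝ (Fin d), IsSwitchedSolution A τ s x →
        ‖x 0‖ < δ → ∀ t ≥ (0 : ℝ), ‖x t‖ < ε) ∧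
    (∀ r > (0 : ℝ), ∀ ε > (0 : ℝ), ∃ T > (0 : ℝ),
      ∀ x : ℝ → EuclideanSpace ℝ (Fin d), IsSwitchedSolution A τ s x →
        ‖x 0‖ < r → ∀ t > T, ‖x t‖ < ε) := by
  refine ⟨fun ε hε => ?_, hconv⟩
  obtain ⟨T, -, hT⟩ := hconv 1 one_pos ε hε
  obtain ⟨M, hM0, hM⟩ := Matrix.exists_forall_norm_toEuclideanLin_le A
  refine ⟨min 1 (ε / Real.exp (M * T)), by positivity, fun x hx hx0 t ht => ?_⟩
  rcases le_or_gt t T with htT | htT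
  · calc ‖x t‖ ≤ ‖x 0‖ * Real.exp (M * t) := hx.norm_le_mul_exp hτ0 hτtop hM ht
      _ ≤ ‖x 0‖ * Real.exp (M * T) := by gcongr
      _ < ε / Real.exp (M * T) * Real.exp (M * T) := by
        gcongr
        exact hx0.trans_le (min_le_right _ _)
      _ = ε := div_mul_cancel₀ ε (Real.exp_pos _).ne'
  · exact hT x hx (hx0.trans_le (min_le_left _ _)) t htT

/-- If the switched linear system is uniformly globally asymptotically convergent for the
switching signal `(τ, s)`, then it is also Lyapunov stable for that signal; consequently it
is globally asymptotically stable (Lyapunov stability together with uniform global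
asymptotic convergence). -/
theorem stmt0 {d N : ℕ} (A : Fin N → Matrix (Fin d) (Fin d) ℝ)
    (τ : ℕ → ℝ) (s : ℕ → Fin N)
    (hτ0 : τ 0 = 0) (hτmono : StrictMono τ)
    (hτtop : Filter.Tendsto τ Filter.atTop Filter.atTop)
    (hs : ∀ n, s (n + 1) ≠ s n)
    (hconv : ∀ r > (0 : ℝ), ∀ ε > (0 : ℝ), ∃ T > (0 : ℝ),
      ∀ x : ℝ → EuclideanSpace ℝ (Fin d), IsSwitchedSolution A τ s x →
        ‖x 0‖ < r → ∀ t > T, ‖x t‖ < ε) :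
    (∀ ε > (0 : ℝ), ∃ δ > (0 : ℝ),
      ∀ x : ℝ → EuclideanSpace ℝ (Fin d), IsSwitchedSolution A τ s x →
        ‖x 0‖ < δ → ∀ t ≥ (0 : ℝ), ‖x t‖ < ε) ∧
    (∀ r > (0 : ℝ), ∀ ε > (0 : ℝ), ∃ T > (0 : ℝ),
      ∀ x : ℝ → EuclideanSpace ℝ (Fin d), IsSwitchedSolution A τ s x →
        ‖x 0‖ < r → ∀ t > T, ‖x t‖ < ε) :=
  stmt0_general A τ s hτ0 hτtop hconv
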